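/- arXiv:1904.06926 — 6 statements merged into one kernel-verified Lean document; each statement's English description precedes it below -/
import Mathlib

section
/- Let H be a complex Hilbert space, let T : H →L[ℂ] H be a bounded self-adjoint operator that is positive (⟪T f, f⟫ ≥ 0 for all f) and injective, and let S : H →L[ℂ] H be a bounded operator such that |⟪S u, v⟫| ≤ M · ‖T^{1/2} u‖ · ‖T^{1/2} v‖ for all u, v ∈ H, where M ≥ 0 is a constant. Then for every s > 0 the operator T + s·I is invertible, and for all f, g ∈ H one has ∫₀^∞ |⟪S((T + s·I)⁻¹ f), (T + s·I)⁻¹ g⟫| ds ≤ M · ‖f‖ · ‖g‖. -/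
/-!
With `R s = (T + s)⁻¹` and `v = R s f`, one has `f = T v + s v`, so
`h(s) = s ⟪f, R s f⟫ = s ⟪T v, v⟫ + s² ‖v‖²` lies in `[0, ‖f‖²]`, while
`h'(s) = ⟪f, (R s - s R s²) f⟫ = ⟪f, R s T R s f⟫ = ‖T^{1/2} R s f‖²`.
Integrating `h'` over `(0, ∞)` gives `∫₀^∞ ‖T^{1/2} R s f‖² ds ≤ ‖f‖²`, and the bound on `S`
followed by Cauchy–Schwarz in `s` gives the estimate.
-/

open MeasureTheory Set RCLike
open scoped InnerProductSpace ENNReal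

theorem iUnion_Ioc_add_one_div_eq_Ioi (a : ℝ) :
    ⋃ n : ℕ, Ioc (a + 1 / (n + 1)) (a + (n + 1)) = Ioi a := by
  refine Subset.antisymm (iUnion_subset fun n x hx => ?_) fun x (hx : a < x) => ?_
  · exact (lt_add_of_pos_right a (by positivity)).trans hx.1
  obtain ⟨n₁, hn₁⟩ := exists_nat_one_div_lt (sub_pos.2 hx)
  obtain ⟨n₂, hn₂⟩ := exists_nat_ge (x - a)
  refine mem_iUnion.2 ⟨max n₁ n₂, ?_, ?_⟩
  · have : 1 / ((max n₁ n₂ : ℕ) + 1 : ℝ) ≤ 1 / (n₁ + 1) := by gcongr; exact le_max_left _ _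
    linarith
  · have : (n₂ : ℝ) ≤ max n₁ n₂ := by exact_mod_cast le_max_right _ _
    linarith

theorem setLIntegral_Ioi_le_of_forall_Ioc_le {f : ℝ → ℝ≥0∞} {a : ℝ} {C : ℝ≥0∞}
    (h : ∀ x y, a < x → x ≤ y → ∫⁻ s in Ioc x y, f s ≤ C) : ∫⁻ s in Ioi a, f s ≤ C := by
  have hmono : Monotone fun n : ℕ => Ioc (a + 1 / (n + 1)) (a + (n + 1)) := fun m n hmn =>
    Ioc_subset_Ioc (by gcongr) (by gcongr)
  rw [← iUnion_Ioc_add_one_div_eq_Ioi, setLIntegral_iUnion_of_directed _ hmono.directed_le]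
  refine iSup_le fun n => h _ _ (lt_add_of_pos_right a (by positivity)) ?_
  have : 1 / ((n : ℝ) + 1) ≤ n + 1 := by
    rw [div_le_iff₀ (by positivity)]
    nlinarith
  linarith

theorem setLIntegral_Ioc_ofReal_eq_sub_of_hasDerivAt {φ h : ℝ → ℝ} {x y : ℝ} (hxy : x ≤ y)
    (hcont : ContinuousOn h (Icc x y)) (hderiv : ∀ s ∈ Ioo x y, HasDerivAt h (φ s) s)
    (hφ : ∀ s ∈ Ioc x y, 0 ≤ φ s) :
    ∫⁻ s in Ioc x y, ENNReal.ofReal (φ s) = ENNReal.ofReal (h y - h x) := by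
  have hint : IntegrableOn φ (Ioc x y) :=
    intervalIntegral.integrableOn_deriv_of_nonneg hcont hderiv fun s hs =>
      hφ s (Ioo_subset_Ioc_self hs)
  rw [← ofReal_integral_eq_lintegral_ofReal hint (ae_restrict_of_forall_mem measurableSet_Ioc hφ),
    ← intervalIntegral.integral_of_le hxy, intervalIntegral.integral_eq_sub_of_hasDerivAt_of_le hxy
      hcont hderiv ((intervalIntegrable_iff_integrableOn_Ioc_of_le hxy).2 hint)]

theorem setLIntegral_Ioi_ofReal_le_of_hasDerivAt {φ h : ℝ → ℝ} {a C : ℝ}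
    (hderiv : ∀ s ∈ Ioi a, HasDerivAt h (φ s) s) (hφ : ∀ s ∈ Ioi a, 0 ≤ φ s)
    (hh : ∀ s ∈ Ioi a, h s ∈ Icc 0 C) :
    ∫⁻ s in Ioi a, ENNReal.ofReal (φ s) ≤ ENNReal.ofReal C := by
  refine setLIntegral_Ioi_le_of_forall_Ioc_le fun x y hx hxy => ?_
  have hsub : Icc x y ⊆ Ioi a := fun s hs => hx.trans_le hs.1
  rw [setLIntegral_Ioc_ofReal_eq_sub_of_hasDerivAt hxy
    (fun s hs => (hderiv s (hsub hs)).continuousAt.continuousWithinAt)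
    (fun s hs => hderiv s (hsub (Ioo_subset_Icc_self hs)))
    (fun s hs => hφ s (hsub (Ioc_subset_Icc_self hs)))]
  exact ENNReal.ofReal_le_ofReal (by linarith [(hh y (hsub ⟨hxy, le_rfl⟩)).2, (hh x hx).1])

theorem ENNReal.lintegral_mul_le_of_lintegral_sq_le {α : Type*} [MeasurableSpace α]
    {μ : Measure α} {F G : α → ℝ≥0∞} (hF : AEMeasurable F μ) (hG : AEMeasurable G μ)
    {a b : ℝ≥0∞} (ha : ∫⁻ x, F x ^ 2 ∂μ ≤ a ^ 2) (hb : ∫⁻ x, G x ^ 2 ∂μ ≤ b ^ 2) :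
    ∫⁻ x, F x * G x ∂μ ≤ a * b := by
  have hsqrt : ∀ {K : α → ℝ≥0∞} {c : ℝ≥0∞}, ∫⁻ x, K x ^ 2 ∂μ ≤ c ^ 2 →
      (∫⁻ x, K x ^ (2 : ℝ) ∂μ) ^ (1 / (2 : ℝ)) ≤ c := fun {K c} hK => by
    calc (∫⁻ x, K x ^ (2 : ℝ) ∂μ) ^ (1 / (2 : ℝ)) ≤ (c ^ 2) ^ ((2 : ℕ) : ℝ)⁻¹ := by
          simp_rw [ENNReal.rpow_two, one_div]
          exact ENNReal.rpow_le_rpow hK (by positivity)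
      _ = c := ENNReal.pow_rpow_inv_natCast two_ne_zero c
  exact (ENNReal.lintegral_mul_le_Lp_mul_Lq μ .two_two hF hG).trans
    (mul_le_mul' (hsqrt ha) (hsqrt hb))

section BanachAlgebra

variable {𝕜 A : Type*} [NontriviallyNormedField 𝕜] [NormedRing A] [NormedAlgebra 𝕜 A]
  [CompleteSpace A] {a : A} {s : 𝕜}

theorem hasDerivAt_ringInverse_add_smul_one (h : IsUnit (a + s • 1)) :
    HasDerivAt (fun t : 𝕜 => Ring.inverse (a + t • 1)) (-Ring.inverse (a + s • 1) ^ 2) s := by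
  have hres : ∀ t : 𝕜, a + t • 1 = algebraMap 𝕜 A t - -a := fun t => by
    rw [Algebra.algebraMap_eq_smul_one, sub_neg_eq_add, add_comm]
  have hs : s ∈ resolventSet 𝕜 (-a) := by rwa [spectrum.mem_resolventSet_iff, ← hres]
  simp only [hres]
  exact spectrum.hasDerivAt_resolvent_const_left hs

theorem hasDerivAt_smul_ringInverse_add_smul_one (h : IsUnit (a + s • 1)) :
    HasDerivAt (fun t : 𝕜 => t • Ring.inverse (a + t • 1))
      (Ring.inverse (a + s • 1) * a * Ring.inverse (a + s • 1)) s := by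
  set R := Ring.inverse (a + s • 1)
  have hRa : R * a = 1 - s • R := by
    rw [eq_sub_iff_add_eq, ← mul_one (s • R), smul_mul_assoc, ← mul_smul_comm, ← mul_add,
      Ring.inverse_mul_cancel _ h]
  refine ((hasDerivAt_id s).smul (hasDerivAt_ringInverse_add_smul_one h)).congr_deriv ?_
  rw [hRa, sub_mul, one_mul, smul_mul_assoc, id, one_smul, smul_neg, sq]
  abel

end BanachAlgebra

section CStarAlgebra

variable {A : Type*} [CStarAlgebra A] [PartialOrder A] [StarOrderedRing A] {a : A}

theorem isUnit_add_smul_one_of_nonneg (ha : 0 ≤ a) {s : ℝ} (hs : 0 < s) : IsUnit (a + s • 1) := by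
  rw [add_comm]
  exact ((isStrictlyPositive_one.smul hs).add_nonneg ha).isUnit

theorem continuousOn_ringInverse_add_smul_one (ha : 0 ≤ a) :
    ContinuousOn (fun s : ℝ => Ring.inverse (a + s • 1)) (Ioi 0) := fun _ hs =>
  (hasDerivAt_ringInverse_add_smul_one
    (isUnit_add_smul_one_of_nonneg ha hs)).continuousAt.continuousWithinAt

end CStarAlgebra

section InnerProductSpace

variable {𝕜 E : Type*} [RCLike 𝕜] [NormedAddCommGroup E] [InnerProductSpace 𝕜 E] {v w : E}
  {s : ℝ}

theorem re_inner_add_smul_smul_nonneg (hwv : 0 ≤ re ⟪w, v⟫_𝕜) (hs : 0 ≤ s) :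
    0 ≤ re ⟪w + (s : 𝕜) • v, (s : 𝕜) • v⟫_𝕜 := by
  rw [inner_add_left, inner_smul_left, inner_smul_right, inner_smul_right,
    inner_self_eq_norm_sq_to_K]
  simp only [conj_ofReal, map_add, mul_re, ofReal_re, ofReal_im, zero_mul, sub_zero,
    re_ofReal_pow, im_ofReal_pow, mul_zero, mul_im, add_zero]
  positivity

theorem re_inner_add_smul_smul_le_norm_sq (hwv : 0 ≤ re ⟪w, v⟫_𝕜) (hs : 0 ≤ s) :
    re ⟪w + (s : 𝕜) • v, (s : 𝕜) • v⟫_𝕜 ≤ ‖w + (s : 𝕜) • v‖ ^ 2 := by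
  rw [norm_sq_eq_re_inner (𝕜 := 𝕜), inner_add_right (y := w), map_add, le_add_iff_nonneg_left,
    inner_add_left, inner_smul_left]
  simp only [inner_self_eq_norm_sq_to_K, conj_ofReal, map_add, re_ofReal_pow, mul_re, ofReal_re,
    ofReal_im, zero_mul, sub_zero]
  rw [inner_re_symm]
  positivity

end InnerProductSpace

section Hilbert

variable {H : Type*} [NormedAddCommGroup H] [InnerProductSpace ℂ H] [CompleteSpace H]
  {T : H →L[ℂ] H} {s : ℝ}

theorem ContinuousLinearMap.norm_cfc_sqrt_apply_sq (hT : 0 ≤ T) (x : H) :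
    ‖cfc Real.sqrt T x‖ ^ 2 = re ⟪T x, x⟫_ℂ := by
  rw [← cfcₙ_eq_cfc, ← CFC.sqrt_eq_real_sqrt T, apply_norm_sq_eq_inner_adjoint_left,
    (CFC.sqrt_nonneg T).isSelfAdjoint.adjoint_eq, ← ContinuousLinearMap.mul_def,
    CFC.sqrt_mul_sqrt_self T]

theorem apply_ringInverse_add_smul_one_apply_add_smul (hT : 0 ≤ T) (hs : 0 < s) (f : H) :
    T (Ring.inverse (T + s • 1) f) + (s : ℂ) • Ring.inverse (T + s • 1) f = f := by
  have h := congrArg (· f) (Ring.mul_inverse_cancel _ (isUnit_add_smul_one_of_nonneg hT hs))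
  simp only [mul_apply_eq_comp, add_apply, smul_apply, one_apply_eq_self] at h
  rwa [real_smul_eq_coe_smul (K := ℂ)] at h

theorem re_inner_smul_ringInverse_add_smul_one_mem_Icc (hT : 0 ≤ T) (hs : 0 < s) (f : H) :
    re ⟪f, (s • Ring.inverse (T + s • 1)) f⟫_ℂ ∈ Icc 0 (‖f‖ ^ 2) := by
  have hf := apply_ringInverse_add_smul_one_apply_add_smul hT hs f
  rw [smul_apply, real_smul_eq_coe_smul (K := ℂ)]
  generalize Ring.inverse (T + s • 1) f = v at hf ⊢
  subst hf
  have hTv : 0 ≤ re ⟪T v, v⟫_ℂ := ((T.nonneg_iff_isPositive).1 hT).2 v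
  exact ⟨re_inner_add_smul_smul_nonneg hTv hs.le, re_inner_add_smul_smul_le_norm_sq hTv hs.le⟩

theorem hasDerivAt_re_inner_smul_ringInverse_add_smul_one (hT : 0 ≤ T) (hs : 0 < s) (f : H) :
    HasDerivAt (fun t : ℝ => re ⟪f, (t • Ring.inverse (T + t • 1)) f⟫_ℂ)
      (‖cfc Real.sqrt T (Ring.inverse (T + s • 1) f)‖ ^ 2) s := by
  let L : (H →L[ℂ] H) →L[ℝ] ℝ := reCLM.comp
    (((innerSL ℂ f).restrictScalars ℝ).comp ((ContinuousLinearMap.apply ℂ H f).restrictScalars ℝ))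
  refine (L.hasFDerivAt.comp_hasDerivAt s
    (hasDerivAt_smul_ringInverse_add_smul_one (isUnit_add_smul_one_of_nonneg hT hs))).congr_deriv ?_
  have hR : IsSelfAdjoint (Ring.inverse (T + s • 1)) :=
    (add_nonneg hT (smul_nonneg hs.le zero_le_one)).isSelfAdjoint.ringInverse
  change re ⟪f, Ring.inverse (T + s • 1) (T (Ring.inverse (T + s • 1) f))⟫_ℂ = _
  rw [← hR.adjoint_eq, ContinuousLinearMap.adjoint_inner_right, hR.adjoint_eq, inner_re_symm,
    T.norm_cfc_sqrt_apply_sq hT]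

theorem setLIntegral_Ioi_norm_cfc_sqrt_ringInverse_sq_le (hT : 0 ≤ T) (f : H) :
    ∫⁻ s in Ioi (0 : ℝ), ENNReal.ofReal ‖cfc Real.sqrt T (Ring.inverse (T + s • 1) f)‖ ^ 2 ≤
      ENNReal.ofReal ‖f‖ ^ 2 := by
  simp_rw [← ENNReal.ofReal_pow (norm_nonneg _)]
  exact setLIntegral_Ioi_ofReal_le_of_hasDerivAt
    (fun s hs => hasDerivAt_re_inner_smul_ringInverse_add_smul_one hT hs f)
    (fun s _ => sq_nonneg _) (fun s hs => re_inner_smul_ringInverse_add_smul_one_mem_Icc hT hs f)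

end Hilbert

theorem integral_abs_inner_resolvent_le_general {H : Type*} [NormedAddCommGroup H]
    [InnerProductSpace ℂ H] [CompleteSpace H] (T S : H →L[ℂ] H) (M : ℝ)
    (hT : IsSelfAdjoint T) (hpos : ∀ f : H, 0 ≤ (inner ℂ (T f) f : ℂ).re)
    (hS : ∀ u v : H, ‖(inner ℂ (S u) v : ℂ)‖ ≤
      M * ‖cfc Real.sqrt T u‖ * ‖cfc Real.sqrt T v‖) :
    (∀ s : ℝ, 0 < s → IsUnit (T + s • (1 : H →L[ℂ] H))) ∧
    ∀ f g : H,
      ∫⁻ s in Set.Ioi (0 : ℝ),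
          ENNReal.ofReal
            ‖(inner ℂ (S (Ring.inverse (T + s • (1 : H →L[ℂ] H)) f))
                (Ring.inverse (T + s • (1 : H →L[ℂ] H)) g) : ℂ)‖
        ≤ ENNReal.ofReal (M * ‖f‖ * ‖g‖) := by
  have hT₀ : 0 ≤ T := T.nonneg_iff_isPositive.2 (ContinuousLinearMap.isPositive_def'.2 ⟨hT, hpos⟩)
  refine ⟨fun s hs => isUnit_add_smul_one_of_nonneg hT₀ hs, fun f g => ?_⟩
  have hofReal : ∀ a b : ℝ, 0 ≤ a → 0 ≤ b →
      ENNReal.ofReal (M * a * b) = ENNReal.ofReal M * (ENNReal.ofReal a * ENNReal.ofReal b) :=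
    fun a b ha hb => by rw [mul_assoc, ENNReal.ofReal_mul' (by positivity), ENNReal.ofReal_mul ha]
  let F (u : H) (s : ℝ) : ℝ≥0∞ := ENNReal.ofReal ‖cfc Real.sqrt T (Ring.inverse (T + s • 1) u)‖
  have hF (u : H) : AEMeasurable (F u) (volume.restrict (Ioi 0)) := by
    refine ContinuousOn.aemeasurable ?_ measurableSet_Ioi
    exact ENNReal.continuous_ofReal.comp_continuousOn <| continuous_norm.comp_continuousOn <|
      (cfc Real.sqrt T).continuous.comp_continuousOn <|
        (continuousOn_ringInverse_add_smul_one hT₀).clm_apply continuousOn_const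
  calc _ ≤ ∫⁻ s in Ioi 0, ENNReal.ofReal M * (F f s * F g s) := lintegral_mono fun s =>
        (ENNReal.ofReal_le_ofReal (hS _ _)).trans_eq (hofReal _ _ (norm_nonneg _) (norm_nonneg _))
    _ = ENNReal.ofReal M * ∫⁻ s in Ioi 0, F f s * F g s :=
        lintegral_const_mul' _ _ ENNReal.ofReal_ne_top
    _ ≤ ENNReal.ofReal M * (ENNReal.ofReal ‖f‖ * ENNReal.ofReal ‖g‖) := by
        gcongr
        exact ENNReal.lintegral_mul_le_of_lintegral_sq_le (hF f) (hF g)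
          (setLIntegral_Ioi_norm_cfc_sqrt_ringInverse_sq_le hT₀ f)
          (setLIntegral_Ioi_norm_cfc_sqrt_ringInverse_sq_le hT₀ g)
    _ = ENNReal.ofReal (M * ‖f‖ * ‖g‖) := (hofReal _ _ (norm_nonneg _) (norm_nonneg _)).symm

/-- Let `T` be a bounded self-adjoint positive injective operator on a complex Hilbert space
and `S` a bounded operator with `|⟪S u, v⟫| ≤ M ‖T^{1/2} u‖ ‖T^{1/2} v‖` for all `u, v`.
Then for every `s > 0` the operator `T + s • 1` is invertible and, for all `f, g`,
`∫₀^∞ |⟪S((T + s • 1)⁻¹ f), (T + s • 1)⁻¹ g⟫| ds ≤ M ‖f‖ ‖g‖`.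
Here `T^{1/2} = cfc Real.sqrt T` and the integral is the lower Lebesgue integral. -/
theorem integral_abs_inner_resolvent_le {H : Type*} [NormedAddCommGroup H]
    [InnerProductSpace ℂ H] [CompleteSpace H] (T S : H →L[ℂ] H) (M : ℝ)
    (hT : IsSelfAdjoint T) (hpos : ∀ f : H, 0 ≤ (inner ℂ (T f) f : ℂ).re)
    (hinj : Function.Injective T) (hM : 0 ≤ M)
    (hS : ∀ u v : H, ‖(inner ℂ (S u) v : ℂ)‖ ≤
      M * ‖cfc Real.sqrt T u‖ * ‖cfc Real.sqrt T v‖) :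
    (∀ s : ℝ, 0 < s → IsUnit (T + s • (1 : H →L[ℂ] H))) ∧
    ∀ f g : H,
      ∫⁻ s in Set.Ioi (0 : ℝ),
          ENNReal.ofReal
            ‖(inner ℂ (S (Ring.inverse (T + s • (1 : H →L[ℂ] H)) f))
                (Ring.inverse (T + s • (1 : H →L[ℂ] H)) g) : ℂ)‖
        ≤ ENNReal.ofReal (M * ‖f‖ * ‖g‖) :=
  integral_abs_inner_resolvent_le_general T S M hT hpos hS
end

section
/- Let H be a complex Hilbert space, let T : H →L[ℂ] H be a bounded self-adjoint positive operator, let A : H →L[ℂ] H be any bounded operator, let τ ≥ 0, and let φ, ψ ∈ H be eigenvectors of T: T φ = λ·φ and T ψ = μ·ψ with λ, μ > 0. Then for every s > 0 the operator T + (τ+s)·I is invertible with (T + (τ+s)·I)⁻¹ φ = (λ+τ+s)⁻¹ φ and (T + (τ+s)·I)⁻¹ ψ = (μ+τ+s)⁻¹ ψ; the function s ↦ ⟪A((T+(τ+s)·I)⁻¹ φ), (T+(τ+s)·I)⁻¹ ψ⟫ is integrable on (0,∞); and ∫₀^∞ ⟪A((T+(τ+s)·I)⁻¹ φ), (T+(τ+s)·I)⁻¹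 ψ⟫ ds = c · ⟪A φ, ψ⟫, where c = (log(λ+τ) − log(μ+τ))/(λ − μ) if λ ≠ μ and c = 1/(λ+τ) if λ = μ. -/
/-!
On an eigenvector of `T` with eigenvalue `λ` the resolvent `(T + t)⁻¹` acts as the scalar
`(λ + t)⁻¹`, so the integrand is `(λ + τ + s)⁻¹ (μ + τ + s)⁻¹ ⟪A φ, ψ⟫` and everything reduces
to the elementary integral `∫₀^∞ ds / ((a + s)(b + s))`, with antiderivative
`(log (b + s) - log (a + s)) / (a - b)` (or `-(a + s)⁻¹` when `a = b`). The resolvent exists for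
`t > 0` because `T + t` is coercive: `re ⟪(T + t) x, x⟫ ≥ t ‖x‖²`.
-/

open MeasureTheory Set Filter Topology

theorem integrableOn_Ioi_and_integral_Ioi_of_hasDerivAt_of_nonneg {f g : ℝ → ℝ} {a : ℝ}
    (hderiv : ∀ x ∈ Ici a, HasDerivAt g (f x) x) (hf : ∀ x ∈ Ioi a, 0 ≤ f x)
    (hg : Tendsto g atTop (𝓝 0)) :
    IntegrableOn f (Ioi a) ∧ ∫ x in Ioi a, f x = -g a := by
  refine ⟨integrableOn_Ioi_deriv_of_nonneg' hderiv hf hg, ?_⟩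
  rw [integral_Ioi_of_hasDerivAt_of_nonneg' hderiv hf hg, zero_sub]

theorem integral_Ioi_inv_add_mul_inv_add_self {a : ℝ} (ha : 0 < a) :
    IntegrableOn (fun s => (a + s)⁻¹ * (a + s)⁻¹) (Ioi 0) ∧
      ∫ s in Ioi (0 : ℝ), (a + s)⁻¹ * (a + s)⁻¹ = 1 / a := by
  have hderiv : ∀ x ∈ Ici (0 : ℝ), HasDerivAt (fun s => -(a + s)⁻¹) ((a + x)⁻¹ * (a + x)⁻¹) x := by
    intro x hx
    have hax : a + x ≠ 0 := by have : (0 : ℝ) ≤ x := hx; positivity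
    exact (((hasDerivAt_id' x).const_add a).inv hax).neg.congr_deriv (by field_simp)
  have htend : Tendsto (fun s : ℝ => -(a + s)⁻¹) atTop (𝓝 0) := by
    simpa using (tendsto_atTop_add_const_left _ a tendsto_id).inv_tendsto_atTop.neg
  simpa using integrableOn_Ioi_and_integral_Ioi_of_hasDerivAt_of_nonneg hderiv
    (fun x hx => by have : (0 : ℝ) < x := hx; positivity) htend

theorem integral_Ioi_inv_add_mul_inv_add_of_ne {a b : ℝ} (ha : 0 < a) (hb : 0 < b) (hab : a ≠ b) :
    IntegrableOn (fun s => (a + s)⁻¹ * (b + s)⁻¹) (Ioi 0) ∧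
      ∫ s in Ioi (0 : ℝ), (a + s)⁻¹ * (b + s)⁻¹ = (Real.log a - Real.log b) / (a - b) := by
  have hderiv : ∀ x ∈ Ici (0 : ℝ), HasDerivAt
      (fun s => (Real.log (b + s) - Real.log (a + s)) / (a - b)) ((a + x)⁻¹ * (b + x)⁻¹) x := by
    intro x hx
    have hx : (0 : ℝ) ≤ x := hx
    have hax : a + x ≠ 0 := by positivity
    have hbx : b + x ≠ 0 := by positivity
    exact ((((hasDerivAt_id' x).const_add b).log hbx).sub
      (((hasDerivAt_id' x).const_add a).log hax)).div_const (a - b) |>.congr_deriv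
        (by field_simp; ring)
  -- `log (b + s) - log (a + s) = log ((a + s) + (b - a)) - log (a + s)` with `a + s → ∞`
  have htend : Tendsto (fun s => (Real.log (b + s) - Real.log (a + s)) / (a - b)) atTop (𝓝 0) := by
    have := ((Real.tendsto_log_comp_add_sub_log (b - a)).comp
      (tendsto_atTop_add_const_left _ a tendsto_id)).div_const (a - b)
    rw [zero_div] at this
    refine this.congr fun s => ?_
    simp only [Function.comp_apply, id]
    ring_nf
  have := integrableOn_Ioi_and_integral_Ioi_of_hasDerivAt_of_nonneg hderiv
    (fun x hx => by have : (0 : ℝ) < x := hx; positivity) htend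
  refine ⟨this.1, this.2.trans ?_⟩
  simp only [add_zero]
  ring

theorem integral_Ioi_inv_add_mul_inv_add {a b : ℝ} (ha : 0 < a) (hb : 0 < b) :
    IntegrableOn (fun s => (a + s)⁻¹ * (b + s)⁻¹) (Ioi 0) ∧
      ∫ s in Ioi (0 : ℝ), (a + s)⁻¹ * (b + s)⁻¹ =
        if a = b then 1 / a else (Real.log a - Real.log b) / (a - b) := by
  split_ifs with hab
  · subst hab
    exact integral_Ioi_inv_add_mul_inv_add_self ha
  · exact integral_Ioi_inv_add_mul_inv_add_of_ne ha hb hab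

theorem ContinuousLinearMap.isUnit_add_smul_one_of_re_inner_nonneg {𝕜 E : Type*} [RCLike 𝕜]
    [NormedAddCommGroup E] [InnerProductSpace 𝕜 E] [NormedSpace ℝ E] [IsScalarTower ℝ 𝕜 E]
    [CompleteSpace E]
    (T : E →L[𝕜] E) (hT : ∀ x, 0 ≤ RCLike.re (inner 𝕜 (T x) x)) {c : ℝ} (hc : 0 < c) :
    IsUnit (T + c • (1 : E →L[𝕜] E)) := by
  refine isUnit_of_forall_le_norm_inner_map _ (c := ⟨c, hc.le⟩) hc fun x => ?_
  calc ‖x‖ ^ 2 * c ≤ RCLike.re (inner 𝕜 (T x) x) + c * ‖x‖ ^ 2 := by nlinarith [hT x]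
    _ = RCLike.re (inner 𝕜 ((T + c • (1 : E →L[𝕜] E)) x) x) := by
      rw [add_apply, inner_add_left, map_add, smul_apply,
        one_apply_eq_self, inner_smul_left_eq_smul, RCLike.smul_re, inner_self_eq_norm_sq]
    _ ≤ ‖inner 𝕜 ((T + c • (1 : E →L[𝕜] E)) x) x‖ := RCLike.re_le_norm _

theorem ContinuousLinearMap.add_smul_one_apply_of_apply_eq_smul {R S M : Type*} [Semiring R]
    [Semiring S] [AddCommMonoid M] [TopologicalSpace M] [ContinuousAdd M] [Module R M] [Module S M]
    [SMulCommClass R S M] [ContinuousConstSMul S M] {T : M →L[R] M} {x : M} {lam : S}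
    (hx : T x = lam • x) (c : S) : (T + c • (1 : M →L[R] M)) x = (lam + c) • x := by
  rw [add_apply, hx, add_smul]; rfl

theorem ContinuousLinearMap.ring_inverse_apply_of_apply_eq_smul {R M S : Type*} [Semiring R]
    [AddCommMonoid M] [TopologicalSpace M] [Module R M] [DivisionRing S] [Module S M]
    [LinearMap.CompatibleSMul M M S R] {B : M →L[R] M} (hB : IsUnit B) {r : S} (hr : r ≠ 0)
    {x : M} (hx : B x = r • x) : Ring.inverse B x = r⁻¹ • x := by
  have hBx : B (r⁻¹ • x) = x := by
    rw [ContinuousLinearMap.map_smul_of_tower, hx, smul_smul, inv_mul_cancel₀ hr, one_smul]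
  conv_lhs => rw [← hBx]
  exact congrArg (· (r⁻¹ • x)) (Ring.inverse_mul_cancel B hB)

theorem integral_inner_resolvent_eigenvectors_general {H : Type*} [NormedAddCommGroup H]
    [InnerProductSpace ℂ H] [CompleteSpace H] (T A : H →L[ℂ] H) (τ lam mu : ℝ) (φ ψ : H)
    (hpos : ∀ f : H, 0 ≤ (inner ℂ (T f) f : ℂ).re)
    (hτ : 0 ≤ τ) (hlam : 0 < lam) (hmu : 0 < mu)
    (hφ : T φ = lam • φ) (hψ : T ψ = mu • ψ) :
    (∀ s : ℝ, 0 < s →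
      IsUnit (T + (τ + s) • (1 : H →L[ℂ] H)) ∧
      Ring.inverse (T + (τ + s) • (1 : H →L[ℂ] H)) φ = (lam + τ + s)⁻¹ • φ ∧
      Ring.inverse (T + (τ + s) • (1 : H →L[ℂ] H)) ψ = (mu + τ + s)⁻¹ • ψ) ∧
    IntegrableOn
      (fun s : ℝ => (inner ℂ (A (Ring.inverse (T + (τ + s) • (1 : H →L[ℂ] H)) φ))
        (Ring.inverse (T + (τ + s) • (1 : H →L[ℂ] H)) ψ) : ℂ))
      (Set.Ioi 0) ∧
    ∫ s in Set.Ioi (0 : ℝ),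
        (inner ℂ (A (Ring.inverse (T + (τ + s) • (1 : H →L[ℂ] H)) φ))
          (Ring.inverse (T + (τ + s) • (1 : H →L[ℂ] H)) ψ) : ℂ)
      = (if lam = mu then 1 / (lam + τ)
          else (Real.log (lam + τ) - Real.log (mu + τ)) / (lam - mu)) • (inner ℂ (A φ) ψ : ℂ) := by
  have hres : ∀ s : ℝ, 0 < s →
      IsUnit (T + (τ + s) • (1 : H →L[ℂ] H)) ∧
      Ring.inverse (T + (τ + s) • (1 : H →L[ℂ] H)) φ = (lam + τ + s)⁻¹ • φ ∧
      Ring.inverse (T + (τ + s) • (1 : H →L[ℂ] H)) ψ = (mu + τ + s)⁻¹ • ψ := by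
    intro s hs
    have hu := T.isUnit_add_smul_one_of_re_inner_nonneg hpos (c := τ + s) (by positivity)
    refine ⟨hu, ContinuousLinearMap.ring_inverse_apply_of_apply_eq_smul hu (by positivity) ?_,
      ContinuousLinearMap.ring_inverse_apply_of_apply_eq_smul hu (by positivity) ?_⟩
    · rw [T.add_smul_one_apply_of_apply_eq_smul hφ, add_assoc]
    · rw [T.add_smul_one_apply_of_apply_eq_smul hψ, add_assoc]
  have hinner : EqOn (fun s : ℝ => ((lam + τ + s)⁻¹ * (mu + τ + s)⁻¹) • inner ℂ (A φ) ψ)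
      (fun s : ℝ => inner ℂ (A (Ring.inverse (T + (τ + s) • (1 : H →L[ℂ] H)) φ))
        (Ring.inverse (T + (τ + s) • (1 : H →L[ℂ] H)) ψ)) (Ioi 0) := fun s hs => by
    obtain ⟨-, hφs, hψs⟩ := hres s hs
    dsimp only
    rw [hφs, hψs, ContinuousLinearMap.map_smul_of_tower, inner_smul_left_eq_smul,
      inner_smul_right_eq_smul, smul_smul, mul_comm]
  obtain ⟨hint, hval⟩ := integral_Ioi_inv_add_mul_inv_add (a := lam + τ) (b := mu + τ)
    (by positivity) (by positivity)
  refine ⟨hres, IntegrableOn.congr_fun (hint.smul_const _) hinner measurableSet_Ioi, ?_⟩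
  rw [← setIntegral_congr_fun measurableSet_Ioi hinner, integral_smul_const, hval]
  simp only [add_left_inj, add_sub_add_right_eq_sub]

/-- Let `T` be a bounded self-adjoint positive operator on a complex Hilbert space, `A` any
bounded operator, `τ ≥ 0`, and `φ, ψ` eigenvectors of `T` with eigenvalues `λ, μ > 0`.
Then for every `s > 0` the operator `T + (τ+s) • 1` is invertible, its inverse maps `φ` to
`(λ+τ+s)⁻¹ • φ` and `ψ` to `(μ+τ+s)⁻¹ • ψ`, the function
`s ↦ ⟪A((T+(τ+s)•1)⁻¹ φ), (T+(τ+s)•1)⁻¹ ψ⟫` is integrable on `(0,∞)`, and its integral equals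
`c • ⟪A φ, ψ⟫` with `c = (log(λ+τ) − log(μ+τ))/(λ − μ)` if `λ ≠ μ` and `c = 1/(λ+τ)` else. -/
theorem integral_inner_resolvent_eigenvectors {H : Type*} [NormedAddCommGroup H]
    [InnerProductSpace ℂ H] [CompleteSpace H] (T A : H →L[ℂ] H) (τ lam mu : ℝ) (φ ψ : H)
    (hT : IsSelfAdjoint T) (hpos : ∀ f : H, 0 ≤ (inner ℂ (T f) f : ℂ).re)
    (hτ : 0 ≤ τ) (hlam : 0 < lam) (hmu : 0 < mu)
    (hφ : T φ = lam • φ) (hψ : T ψ = mu • ψ) :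
    (∀ s : ℝ, 0 < s →
      IsUnit (T + (τ + s) • (1 : H →L[ℂ] H)) ∧
      Ring.inverse (T + (τ + s) • (1 : H →L[ℂ] H)) φ = (lam + τ + s)⁻¹ • φ ∧
      Ring.inverse (T + (τ + s) • (1 : H →L[ℂ] H)) ψ = (mu + τ + s)⁻¹ • ψ) ∧
    IntegrableOn
      (fun s : ℝ => (inner ℂ (A (Ring.inverse (T + (τ + s) • (1 : H →L[ℂ] H)) φ))
        (Ring.inverse (T + (τ + s) • (1 : H →L[ℂ] H)) ψ) : ℂ))
      (Set.Ioi 0) ∧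
    ∫ s in Set.Ioi (0 : ℝ),
        (inner ℂ (A (Ring.inverse (T + (τ + s) • (1 : H →L[ℂ] H)) φ))
          (Ring.inverse (T + (τ + s) • (1 : H →L[ℂ] H)) ψ) : ℂ)
      = (if lam = mu then 1 / (lam + τ)
          else (Real.log (lam + τ) - Real.log (mu + τ)) / (lam - mu)) • (inner ℂ (A φ) ψ : ℂ) :=
  integral_inner_resolvent_eigenvectors_general T A τ lam mu φ ψ hpos hτ hlam hmu hφ hψ
end

section
/- Let 0 < ε ≤ 1/2, τ > 0, let λ : ℕ → ℝ satisfy λ k > 0 for all k, and let f : ℕ → ℂ. Then, as an inequality in the extended nonnegative reals [0,∞], ∑'_k (λ k)^(2ε) · (log(1 + τ/(λ k)))² · ‖f k‖² ≤ (1/(2ε))² · τ^(4ε) · ∑'_k (λ k)^(−2ε) · ‖f k‖². -/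
open scoped ENNReal

lemma log_one_add_le_rpow_div {x p : ℝ} (hx : 0 ≤ x) (hp : 0 < p) (hp1 : p ≤ 1) :
    Real.log (1 + x) ≤ x ^ p / p := by
  have h1 : (0:ℝ) < 1 + x := by linarith
  have h2 : Real.log (1 + x) = (1 / p) * Real.log ((1 + x) ^ p) := by
    rw [Real.log_rpow h1]; field_simp
  rw [h2]
  have h3 : Real.log ((1 + x) ^ p) ≤ (1 + x) ^ p - 1 :=
    Real.log_le_sub_one_of_pos (Real.rpow_pos_of_pos h1 p)
  have h4 : (1 + x) ^ p ≤ 1 + x ^ p := by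
    have := NNReal.rpow_add_le_add_rpow 1 (Real.toNNReal x) hp.le hp1
    calc (1 + x) ^ p = ((1 + x.toNNReal : NNReal) : ℝ) ^ p := by
          simp [Real.coe_toNNReal x hx]
      _ = (((1 + x.toNNReal) ^ p : NNReal) : ℝ) := by
          rw [← NNReal.coe_rpow]
      _ ≤ (((1:NNReal) ^ p + x.toNNReal ^ p : NNReal) : ℝ) := by
          exact_mod_cast this
      _ = 1 + x ^ p := by
          simp [NNReal.coe_rpow, Real.coe_toNNReal x hx]
  calc (1 / p) * Real.log ((1 + x) ^ p) ≤ (1 / p) * (x ^ p) := by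
        apply mul_le_mul_of_nonneg_left _ (by positivity)
        linarith
    _ = x ^ p / p := by ring

/-- Let `0 < ε ≤ 1/2`, `τ > 0`, `λ : ℕ → ℝ` with `λ k > 0`, and `f : ℕ → ℂ`. Then, in `[0,∞]`,
`∑' k, (λ k)^(2ε) · (log(1 + τ/(λ k)))² · ‖f k‖²
  ≤ (1/(2ε))² · τ^(4ε) · ∑' k, (λ k)^(−2ε) · ‖f k‖²`. -/
theorem tsum_log_sq_le (ε τ : ℝ) (hε0 : 0 < ε) (hε : ε ≤ 1 / 2) (hτ : 0 < τ)
    (lam : ℕ → ℝ) (hlam : ∀ k, 0 < lam k) (f : ℕ → ℂ) :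
    ∑' k : ℕ, ENNReal.ofReal
        ((lam k) ^ (2 * ε) * (Real.log (1 + τ / lam k)) ^ 2 * ‖f k‖ ^ 2)
      ≤ ENNReal.ofReal ((1 / (2 * ε)) ^ 2 * τ ^ (4 * ε)) *
        ∑' k : ℕ, ENNReal.ofReal ((lam k) ^ (-(2 * ε)) * ‖f k‖ ^ 2) := by
  rw [← ENNReal.tsum_mul_left]
  refine ENNReal.tsum_le_tsum fun k => ?_
  rw [← ENNReal.ofReal_mul (by positivity)]
  apply ENNReal.ofReal_le_ofReal
  have hl := hlam k
  set p := 2 * ε with hp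
  have hp0 : 0 < p := by positivity
  have hp1 : p ≤ 1 := by rw [hp]; linarith
  have key : Real.log (1 + τ / lam k) ≤ (τ / lam k) ^ p / p :=
    log_one_add_le_rpow_div (by positivity) hp0 hp1
  have hlog0 : 0 ≤ Real.log (1 + τ / lam k) :=
    Real.log_nonneg (by nlinarith [div_pos hτ hl])
  have hsq : (Real.log (1 + τ / lam k)) ^ 2 ≤ ((τ / lam k) ^ p / p) ^ 2 :=
    pow_le_pow_left₀ hlog0 key 2
  have hdiv : (τ / lam k) ^ p = τ ^ p * (lam k) ^ (-p) := by
    rw [Real.div_rpow hτ.le hl.le, Real.rpow_neg hl.le, div_eq_mul_inv]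
  have e1 : (lam k) ^ p * ((lam k) ^ (-p)) ^ 2 = (lam k) ^ (-p) := by
    rw [← Real.rpow_natCast ((lam k) ^ (-p)) 2, ← Real.rpow_mul hl.le,
      ← Real.rpow_add hl]
    congr 1; ring
  have e2 : (τ ^ p) ^ 2 = τ ^ (4 * ε) := by
    rw [← Real.rpow_natCast (τ ^ p) 2, ← Real.rpow_mul hτ.le]
    norm_num [hp]; ring_nf
  calc (lam k) ^ p * (Real.log (1 + τ / lam k)) ^ 2 * ‖f k‖ ^ 2
      ≤ (lam k) ^ p * (((τ / lam k) ^ p / p) ^ 2) * ‖f k‖ ^ 2 := by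
        apply mul_le_mul_of_nonneg_right _ (by positivity)
        exact mul_le_mul_of_nonneg_left hsq (by positivity)
    _ = (1 / p) ^ 2 * (τ ^ p) ^ 2 * ((lam k) ^ p * ((lam k) ^ (-p)) ^ 2) * ‖f k‖ ^ 2 := by
        rw [hdiv]; ring
    _ = (1 / p) ^ 2 * τ ^ (4 * ε) * ((lam k) ^ (-p) * ‖f k‖ ^ 2) := by
        rw [e1, e2]; ring
end

section
/- Let H be a complex Hilbert space, let T : H →L[ℂ] H be a bounded self-adjoint operator that is positive (⟪T f, f⟫ ≥ 0 for all f) and injective, let τ > 0, s > 0, and 0 < ε ≤ 1/2. Then the operators T + s·I and T + (τ+s)·I are invertible, and for every g ∈ H, ‖T^{1/2} · ((T + s·I)⁻¹ − (T + (τ+s)·I)⁻¹) · T^ε g‖ ≤ τ^ε · ‖T^{1/2}((T + s·I)⁻¹ g)‖. -/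
/-!
Everything is a function of `T`, so by the functional calculus the left-hand side is `m(T)` applied
to `T^{1/2} (T + s)⁻¹ g`, where `m(t) = τ t^ε / (t + τ + s)` comes from
`(t + s)⁻¹ - (t + τ + s)⁻¹ = τ / ((t + s)(t + τ + s))`. On the spectrum `t ≥ 0`, and weighted
AM-GM `t^ε τ^(1-ε) ≤ t + τ` gives `m(t) ≤ τ^ε`.
-/

theorem mul_rpow_le_rpow_mul_add {τ t ε : ℝ} (hτ : 0 < τ) (ht : 0 ≤ t) (hε0 : 0 ≤ ε)
    (hε1 : ε ≤ 1) : τ * t ^ ε ≤ τ ^ ε * (t + τ) := by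
  have hsplit : τ = τ ^ ε * τ ^ (1 - ε) := by
    rw [← Real.rpow_add hτ, add_sub_cancel, Real.rpow_one]
  have hamgm : t ^ ε * τ ^ (1 - ε) ≤ ε * t + (1 - ε) * τ :=
    Real.geom_mean_le_arith_mean2_weighted hε0 (by linarith) ht hτ.le (by ring)
  calc τ * t ^ ε = τ ^ ε * (t ^ ε * τ ^ (1 - ε)) := by nth_rw 1 [hsplit]; ring
    _ ≤ τ ^ ε * (ε * t + (1 - ε) * τ) := by gcongr
    _ ≤ τ ^ ε * (t + τ) := by gcongr <;> nlinarith

theorem abs_mul_rpow_div_add_le_rpow {τ s t ε : ℝ} (hτ : 0 < τ) (hs : 0 ≤ s) (ht : 0 ≤ t)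
    (hε0 : 0 ≤ ε) (hε1 : ε ≤ 1) : |τ * t ^ ε / (t + (τ + s))| ≤ τ ^ ε := by
  rw [abs_of_nonneg (by positivity), div_le_iff₀ (by positivity)]
  calc τ * t ^ ε ≤ τ ^ ε * (t + τ) := mul_rpow_le_rpow_mul_add hτ ht hε0 hε1
    _ ≤ τ ^ ε * (t + (τ + s)) := by gcongr; linarith

section Resolvent

variable {A : Type*} {p : A → Prop} [TopologicalSpace A] [Ring A] [StarRing A] [Algebra ℝ A]
  [ContinuousFunctionalCalculus ℝ A p] {a : A} {s : ℝ}

theorem cfc_add_const_eq_add_smul_one (ha : p a) : cfc (fun t : ℝ => t + s) a = a + s • 1 := by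
  rw [cfc_add_const s (fun t => t) a, cfc_id' ℝ a, Algebra.algebraMap_eq_smul_one]

theorem isUnit_add_smul_one (ha : p a) (hs : ∀ t ∈ spectrum ℝ a, t + s ≠ 0) :
    IsUnit (a + s • 1) := by
  rw [← cfc_add_const_eq_add_smul_one ha]
  exact (isUnit_cfc_iff _ a).mpr hs

theorem ringInverse_add_smul_one (ha : p a) (hs : ∀ t ∈ spectrum ℝ a, t + s ≠ 0) :
    Ring.inverse (a + s • 1) = cfc (fun t : ℝ => (t + s)⁻¹) a := by
  rw [← cfc_add_const_eq_add_smul_one ha, cfc_inv _ a hs]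

end Resolvent

section Operator

variable {H : Type*} [NormedAddCommGroup H] [InnerProductSpace ℂ H] [CompleteSpace H]
  {T : H →L[ℂ] H}

theorem cfc_apply_cfc_apply {f g : ℝ → ℝ} (hf : ContinuousOn f (spectrum ℝ T))
    (hg : ContinuousOn g (spectrum ℝ T)) (x : H) :
    cfc f T (cfc g T x) = cfc (fun t => f t * g t) T x := by
  rw [cfc_mul f g T]; rfl

theorem norm_cfc_mul_apply_le {f g : ℝ → ℝ} {c : ℝ} (hc : 0 ≤ c)
    (hf : ContinuousOn f (spectrum ℝ T)) (hg : ContinuousOn g (spectrum ℝ T))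
    (hfc : ∀ t ∈ spectrum ℝ T, |f t| ≤ c) (x : H) :
    ‖cfc (fun t => f t * g t) T x‖ ≤ c * ‖cfc g T x‖ := by
  rw [← cfc_apply_cfc_apply hf hg]
  exact (cfc f T).le_of_opNorm_le (norm_cfc_le hc hfc) _

end Operator

theorem weighted_resolvent_difference_bound_general {H : Type*} [NormedAddCommGroup H]
    [InnerProductSpace ℂ H] [CompleteSpace H] (T : H →L[ℂ] H)
    (hT : IsSelfAdjoint T) (hpos : ∀ f : H, 0 ≤ (inner ℂ (T f) f : ℂ).re)
    (τ s ε : ℝ) (hτ : 0 < τ) (hs : 0 < s)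
    (hε0 : 0 < ε) (hε : ε ≤ 1 / 2) :
    IsUnit (T + s • (1 : H →L[ℂ] H)) ∧ IsUnit (T + (τ + s) • (1 : H →L[ℂ] H)) ∧
    ∀ g : H,
      ‖cfc Real.sqrt T
          ((Ring.inverse (T + s • (1 : H →L[ℂ] H)) -
            Ring.inverse (T + (τ + s) • (1 : H →L[ℂ] H)))
            (cfc (fun t : ℝ => t ^ ε) T g))‖
        ≤ τ ^ ε * ‖cfc Real.sqrt T (Ring.inverse (T + s • (1 : H →L[ℂ] H)) g)‖ := by
  have hspec : ∀ t ∈ spectrum ℝ T, 0 ≤ t := spectrum_nonneg_of_nonneg <|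
    (ContinuousLinearMap.nonneg_iff_isPositive T).mpr ⟨hT.isSymmetric, hpos⟩
  have hshift {r : ℝ} (hr : 0 < r) : ∀ t ∈ spectrum ℝ T, t + r ≠ 0 :=
    fun t ht ↦ (add_pos_of_nonneg_of_pos (hspec t ht) hr).ne'
  have hτs : 0 < τ + s := by positivity
  have hr₁ : ContinuousOn (fun t : ℝ ↦ (t + s)⁻¹) (spectrum ℝ T) :=
    ContinuousOn.inv₀ (by fun_prop) (hshift hs)
  have hr₂ : ContinuousOn (fun t : ℝ ↦ (t + (τ + s))⁻¹) (spectrum ℝ T) :=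
    ContinuousOn.inv₀ (by fun_prop) (hshift hτs)
  have hpow : Continuous fun t : ℝ ↦ t ^ ε := Real.continuous_rpow_const hε0.le
  refine ⟨isUnit_add_smul_one hT (hshift hs), isUnit_add_smul_one hT (hshift hτs), fun g ↦ ?_⟩
  rw [ringInverse_add_smul_one hT (hshift hs), ringInverse_add_smul_one hT (hshift hτs),
    ← cfc_sub _ _ T hr₁ hr₂, cfc_apply_cfc_apply (by fun_prop) (by fun_prop),
    cfc_apply_cfc_apply (by fun_prop) (by fun_prop), cfc_apply_cfc_apply (by fun_prop) hr₁]
  have hfactor : cfc (fun t ↦ √t * ((t + s)⁻¹ - (t + (τ + s))⁻¹) * t ^ ε) T =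
      cfc (fun t ↦ τ * t ^ ε / (t + (τ + s)) * (√t * (t + s)⁻¹)) T :=
    cfc_congr fun t ht ↦ by
      have := hshift hs t ht
      have := hshift hτs t ht
      field_simp
      ring
  rw [hfactor]
  exact norm_cfc_mul_apply_le (by positivity) ((continuousOn_const.mul hpow.continuousOn).div
    (by fun_prop) (hshift hτs)) (Real.continuous_sqrt.continuousOn.mul hr₁)
    (fun t ht ↦ abs_mul_rpow_div_add_le_rpow hτ hs.le (hspec t ht) hε0.le (by linarith)) g

/-- Let `T` be a bounded self-adjoint positive injective operator on a complex Hilbert space,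
`τ > 0`, `s > 0`, `0 < ε ≤ 1/2`. Then `T + s • 1` and `T + (τ+s) • 1` are invertible and for
every `g`, `‖T^{1/2}(((T + s•1)⁻¹ − (T + (τ+s)•1)⁻¹)(T^ε g))‖ ≤ τ^ε ‖T^{1/2}((T + s•1)⁻¹ g)‖`,
where `T^{1/2} = cfc Real.sqrt T` and `T^ε = cfc (t ↦ t^ε) T` are given by the continuous
functional calculus. -/
theorem weighted_resolvent_difference_bound {H : Type*} [NormedAddCommGroup H]
    [InnerProductSpace ℂ H] [CompleteSpace H] (T : H →L[ℂ] H)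
    (hT : IsSelfAdjoint T) (hpos : ∀ f : H, 0 ≤ (inner ℂ (T f) f : ℂ).re)
    (hinj : Function.Injective T) (τ s ε : ℝ) (hτ : 0 < τ) (hs : 0 < s)
    (hε0 : 0 < ε) (hε : ε ≤ 1 / 2) :
    IsUnit (T + s • (1 : H →L[ℂ] H)) ∧ IsUnit (T + (τ + s) • (1 : H →L[ℂ] H)) ∧
    ∀ g : H,
      ‖cfc Real.sqrt T
          ((Ring.inverse (T + s • (1 : H →L[ℂ] H)) -
            Ring.inverse (T + (τ + s) • (1 : H →L[ℂ] H)))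
            (cfc (fun t : ℝ => t ^ ε) T g))‖
        ≤ τ ^ ε * ‖cfc Real.sqrt T (Ring.inverse (T + s • (1 : H →L[ℂ] H)) g)‖ :=
  weighted_resolvent_difference_bound_general T hT hpos τ s ε hτ hs hε0 hε
end

section
/- Let H be a complex Hilbert space and let T : H →L[ℂ] H be a bounded self-adjoint operator that is positive (⟪T f, f⟫ ≥ 0 for all f). Then for all 0 < s ≤ s′ the operators T + s·I and T + s′·I are invertible, and for every f ∈ H, ‖T^{1/2}((T + s′·I)⁻¹ f)‖ ≤ ‖T^{1/2}((T + s·I)⁻¹ f)‖. -/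
/-! Since `T ≥ 0`, both `T + s • 1` and `T + s' • 1` are strictly positive, and by the continuous
functional calculus `T^{1/2} (T + r • 1)⁻¹ = g_r(T)` with `g_r t = √t / (t + r)`. On the spectrum
`0 ≤ g_{s'} ≤ g_s`, so `g_{s'}(T)² ≤ g_s(T)²` in the Loewner order, and evaluating this quadratic
form at `f` gives `‖g_{s'}(T) f‖² ≤ ‖g_s(T) f‖²`. -/

open ContinuousLinearMap in
lemma ContinuousLinearMap.norm_apply_le_of_star_mul_self_le {𝕜 E : Type*} [RCLike 𝕜]
    [NormedAddCommGroup E] [InnerProductSpace 𝕜 E] [CompleteSpace E] {A B : E →L[𝕜] E}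
    (h : star A * A ≤ star B * B) (x : E) : ‖A x‖ ≤ ‖B x‖ := by
  have hx := ((le_def _ _).1 h).re_inner_nonneg_left x
  rw [sub_apply, inner_sub_left, map_sub, sub_nonneg] at hx
  rw [apply_norm_eq_sqrt_inner_adjoint_left, apply_norm_eq_sqrt_inner_adjoint_left]
  exact Real.sqrt_le_sqrt hx

section CStarAlgebra

variable {A : Type*} [CStarAlgebra A] {a : A} {r : ℝ}

lemma add_smul_one_eq_cfc (ha : IsSelfAdjoint a) : a + r • 1 = cfc (· + r) a := by
  rw [cfc_add .., cfc_id' ℝ a, cfc_const r a, Algebra.algebraMap_eq_smul_one]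

variable [PartialOrder A] [StarOrderedRing A]

lemma isStrictlyPositive_add_smul_one (ha : 0 ≤ a) (hr : 0 < r) :
    IsStrictlyPositive (a + r • 1) :=
  (isStrictlyPositive_one.smul hr).nonneg_add ha

lemma continuousOn_inv_add_of_nonneg (ha : 0 ≤ a) (hr : 0 < r) :
    ContinuousOn (fun t ↦ (t + r)⁻¹) (spectrum ℝ a) :=
  ContinuousOn.inv₀ (by fun_prop) fun t ht ↦ by
    have := spectrum_nonneg_of_nonneg ha ht
    positivity

lemma ringInverse_add_smul_one_eq_cfc (ha : 0 ≤ a) (hr : 0 < r) :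
    Ring.inverse (a + r • 1) = cfc (fun t ↦ (t + r)⁻¹) a := by
  rw [add_smul_one_eq_cfc ha.isSelfAdjoint, cfc_inv _ _ fun t ht ↦ ?_]
  have := spectrum_nonneg_of_nonneg ha ht
  positivity

lemma cfc_mul_ringInverse_add_smul_one (f : ℝ → ℝ) (ha : 0 ≤ a) (hr : 0 < r)
    (hf : ContinuousOn f (spectrum ℝ a) := by cfc_cont_tac) :
    cfc f a * Ring.inverse (a + r • 1) = cfc (fun t ↦ f t * (t + r)⁻¹) a := by
  rw [ringInverse_add_smul_one_eq_cfc ha hr,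
    ← cfc_mul f _ a hf (continuousOn_inv_add_of_nonneg ha hr)]

lemma star_cfc_mul_cfc_le {f g : ℝ → ℝ}
    (hf₀ : ∀ x ∈ spectrum ℝ a, 0 ≤ f x) (hfg : ∀ x ∈ spectrum ℝ a, f x ≤ g x)
    (hf : ContinuousOn f (spectrum ℝ a) := by cfc_cont_tac)
    (hg : ContinuousOn g (spectrum ℝ a) := by cfc_cont_tac) :
    star (cfc f a) * cfc f a ≤ star (cfc g a) * cfc g a := by
  rw [(cfc_predicate f a).star_eq, (cfc_predicate g a).star_eq, ← cfc_mul f f a, ← cfc_mul g g a]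
  exact cfc_mono fun x hx ↦
    mul_le_mul (hfg x hx) (hfg x hx) (hf₀ x hx) ((hf₀ x hx).trans (hfg x hx))

end CStarAlgebra

/-- Let `T` be a bounded self-adjoint positive operator on a complex Hilbert space. Then for
all `0 < s ≤ s'` the operators `T + s • 1` and `T + s' • 1` are invertible, and for every `f`,
`‖T^{1/2}((T + s' • 1)⁻¹ f)‖ ≤ ‖T^{1/2}((T + s • 1)⁻¹ f)‖`, where `T^{1/2} = cfc Real.sqrt T`
is given by the continuous functional calculus. -/
theorem sqrt_resolvent_norm_antitone {H : Type*} [NormedAddCommGroup H]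
    [InnerProductSpace ℂ H] [CompleteSpace H] (T : H →L[ℂ] H)
    (hT : IsSelfAdjoint T) (hpos : ∀ f : H, 0 ≤ (inner ℂ (T f) f : ℂ).re)
    (s s' : ℝ) (hs : 0 < s) (hss' : s ≤ s') :
    IsUnit (T + s • (1 : H →L[ℂ] H)) ∧ IsUnit (T + s' • (1 : H →L[ℂ] H)) ∧
    ∀ f : H,
      ‖cfc Real.sqrt T (Ring.inverse (T + s' • (1 : H →L[ℂ] H)) f)‖
        ≤ ‖cfc Real.sqrt T (Ring.inverse (T + s • (1 : H →L[ℂ] H)) f)‖ := by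
  have hT₀ : 0 ≤ T := (T.nonneg_iff_isPositive).2 ⟨hT.isSymmetric, hpos⟩
  have hs' : 0 < s' := hs.trans_le hss'
  refine ⟨(isStrictlyPositive_add_smul_one hT₀ hs).isUnit,
    (isStrictlyPositive_add_smul_one hT₀ hs').isUnit, fun f ↦ ?_⟩
  have hsqrt := Real.continuous_sqrt.continuousOn (s := spectrum ℝ T)
  simp only [← mul_apply_eq_comp, cfc_mul_ringInverse_add_smul_one _ hT₀ hs hsqrt,
    cfc_mul_ringInverse_add_smul_one _ hT₀ hs' hsqrt]
  refine ContinuousLinearMap.norm_apply_le_of_star_mul_self_le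
    (star_cfc_mul_cfc_le (fun t ht ↦ ?_) (fun t ht ↦ ?_)
      (hsqrt.fun_mul (continuousOn_inv_add_of_nonneg hT₀ hs'))
      (hsqrt.fun_mul (continuousOn_inv_add_of_nonneg hT₀ hs))) f
  all_goals have ht₀ := spectrum_nonneg_of_nonneg hT₀ ht
  · positivity
  · exact mul_le_mul_of_nonneg_left (inv_anti₀ (by positivity) (by linarith)) (Real.sqrt_nonneg t)
end

section
/- Let H be a complex Hilbert space, let T : H →L[ℂ] H be a bounded self-adjoint operator that is positive (⟪T f, f⟫ ≥ 0 for all f) and injective, and let S : H →L[ℂ] H be a bounded operator such that |⟪S u, v⟫| ≤ M · ‖T^{1/2} u‖ · ‖T^{1/2} v‖ for all u, v ∈ H, where M ≥ 0. Then there exists a bounded operator L : H →L[ℂ] H with ‖L‖ ≤ M such that for all f, g ∈ H, ⟪L f, g⟫ = ∫₀^∞ ⟪S((T + s·I)⁻¹ f), (T + s·I)⁻¹ g⟫ ds (in particular, for each f, g this integrand is integrable on (0,∞)). -/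
/-!
Write `R_s = (T + s)⁻¹` for `s > 0`. Since `R_s' = -R_s²` and `R_s T = 1 - s R_s`, the function
`s ↦ s ⟪f, R_s f⟫` has derivative `⟪T R_s f, R_s f⟫ = ‖T^{1/2} R_s f‖²`; it is nonnegative and
tends to `‖f‖²` at infinity, so `∫₀^∞ ‖T^{1/2} R_s f‖² ds ≤ ‖f‖²`. The hypothesis on `S` and AM-GM
bound the integrand by `M/2 (‖T^{1/2} R_s f‖² + ‖T^{1/2} R_s g‖²)`, so the integral is a bounded
sesquilinear form; rescaling `f` and `g` improves its bound `M/2 (‖f‖² + ‖g‖²)` to `M ‖f‖ ‖g‖`,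
and the Riesz representation theorem produces `L`.
-/

open MeasureTheory Set Filter Topology
open scoped InnerProductSpace

theorem integrableOn_Ioi_deriv_and_integral_le_of_nonneg {g g' : ℝ → ℝ} {a l m : ℝ}
    (hderiv : ∀ x ∈ Ioi a, HasDerivAt g (g' x) x) (g'_nonneg : ∀ x ∈ Ioi a, 0 ≤ g' x)
    (hm : ∀ x ∈ Ioi a, m ≤ g x) (hg : Tendsto g atTop (𝓝 l)) :
    IntegrableOn g' (Ioi a) ∧ ∫ x in Ioi a, g' x ≤ l - m := by
  have hmono : MonotoneOn g (Ioi a) :=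
    monotoneOn_of_hasDerivWithinAt_nonneg (convex_Ioi a)
      (fun x hx => (hderiv x hx).continuousAt.continuousWithinAt)
      (fun x hx => (hderiv x (interior_subset hx)).hasDerivWithinAt)
      (fun x hx => g'_nonneg x (interior_subset hx))
  -- Redefining `g` at `a` as its right limit `c` there makes the fundamental theorem of calculus
  -- on `(a, ∞)` applicable.
  set c := sInf (g '' Ioi a)
  have hmc : m ≤ c := le_csInf (nonempty_Ioi.image g) (forall_mem_image.2 hm)
  set ψ := Function.update g a c
  have hψa : ψ a = c := Function.update_self ..
  have hψg : ψ =ᶠ[𝓟 (Ioi a)] g :=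
    eventually_principal.2 fun x hx => Function.update_of_ne hx.ne' _ _
  have hcont : ContinuousWithinAt ψ (Ici a) a := by
    rw [← continuousWithinAt_Ioi_iff_Ici, ContinuousWithinAt, hψa]
    exact (hmono.tendsto_nhdsGT ⟨m, forall_mem_image.2 hm⟩).congr'
      (hψg.filter_mono inf_le_right).symm
  have hderivψ : ∀ x ∈ Ioi a, HasDerivAt ψ (g' x) x := fun x hx =>
    (hderiv x hx).congr_of_eventuallyEq (hψg.filter_mono (le_principal_iff.2 (Ioi_mem_nhds hx)))
  have hψ : Tendsto ψ atTop (𝓝 l) :=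
    hg.congr' (hψg.filter_mono (le_principal_iff.2 (Ioi_mem_atTop a))).symm
  refine ⟨integrableOn_Ioi_deriv_of_nonneg hcont hderivψ g'_nonneg hψ, ?_⟩
  rw [integral_Ioi_of_hasDerivAt_of_nonneg hcont hderivψ g'_nonneg hψ, hψa]
  linarith

theorem LinearMap.norm_apply_le_mul_of_norm_apply_le_half_add_sq {𝕜 E F G : Type*} [RCLike 𝕜]
    [NormedAddCommGroup E] [NormedSpace 𝕜 E] [NormedAddCommGroup F] [NormedSpace 𝕜 F]
    [NormedAddCommGroup G] [NormedSpace 𝕜 G] (B : E →ₗ⋆[𝕜] F →ₗ[𝕜] G) {C : ℝ}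
    (hB : ∀ x y, ‖B x y‖ ≤ C / 2 * (‖x‖ ^ 2 + ‖y‖ ^ 2)) (x : E) (y : F) :
    ‖B x y‖ ≤ C * ‖x‖ * ‖y‖ := by
  rcases eq_or_ne x 0 with rfl | hx
  · simp
  rcases eq_or_ne y 0 with rfl | hy
  · simp
  have hxy : 0 < ‖x‖ * ‖y‖ := mul_pos (norm_pos_iff.2 hx) (norm_pos_iff.2 hy)
  -- Balance the two sides: `‖y‖ • x` and `‖x‖ • y` have the same norm.
  have key := hB ((‖y‖ : 𝕜) • x) ((‖x‖ : 𝕜) • y)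
  simp only [LinearMap.map_smulₛₗ₂, map_smul, smul_smul, RCLike.conj_ofReal, ← RCLike.ofReal_mul,
    norm_smul, RCLike.norm_ofReal, abs_mul, abs_norm] at key
  nlinarith

theorem InnerProductSpace.exists_inner_eq_integral {𝕜 E α : Type*} [RCLike 𝕜]
    [NormedAddCommGroup E] [InnerProductSpace 𝕜 E] [CompleteSpace E] [MeasurableSpace α]
    {μ : Measure α}
    (B : α → E →L⋆[𝕜] E →L[𝕜] 𝕜) {M : ℝ} (hM : 0 ≤ M)
    (hint : ∀ f g, Integrable (fun a => B a f g) μ)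
    (hbound : ∀ f g, ‖∫ a, B a f g ∂μ‖ ≤ M / 2 * (‖f‖ ^ 2 + ‖g‖ ^ 2)) :
    ∃ L : E →L[𝕜] E, ‖L‖ ≤ M ∧ ∀ f g, ⟪L f, g⟫_𝕜 = ∫ a, B a f g ∂μ := by
  let Bint : E →ₗ⋆[𝕜] E →ₗ[𝕜] 𝕜 := LinearMap.mk₂'ₛₗ _ _ (fun f g => ∫ a, B a f g ∂μ)
    (fun f₁ f₂ g => by
      simp only [map_add, add_apply, integral_add (hint _ _) (hint _ _)])
    (fun c f g => by simp only [map_smulₛₗ, smul_apply, integral_smul])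
    (fun f g₁ g₂ => by simp only [map_add, integral_add (hint _ _) (hint _ _)])
    (fun c f g => by simp only [map_smul, integral_smul, RingHom.id_apply])
  let Bc := Bint.mkContinuous₂ M (Bint.norm_apply_le_mul_of_norm_apply_le_half_add_sq hbound)
  refine ⟨continuousLinearMapOfBilin Bc, ?_, continuousLinearMapOfBilin_apply Bc⟩
  exact (LinearIsometry.norm_toContinuousLinearMap_comp _).trans_le
    (Bint.mkContinuous₂_norm_le hM _)

namespace ContinuousLinearMap

variable {H : Type*} [NormedAddCommGroup H] [InnerProductSpace ℂ H] {T : H →L[ℂ] H} {s : ℝ}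

/-- `(T + s)⁻¹`, the paper's `Λ_s⁻¹`; it is the junk value `0` when `T + s` is not invertible. -/
noncomputable def shiftedInverse (T : H →L[ℂ] H) (s : ℝ) : H →L[ℂ] H := Ring.inverse (T + s • 1)

lemma re_inner_add_smul_one_apply_self (T : H →L[ℂ] H) (s : ℝ) (x : H) :
    (⟪(T + s • 1) x, x⟫_ℂ).re = (⟪T x, x⟫_ℂ).re + s * ‖x‖ ^ 2 := by
  rw [add_apply, smul_apply, one_apply_eq_self, inner_add_left,
    RCLike.real_smul_eq_coe_smul (K := ℂ), inner_smul_left, inner_self_eq_norm_sq_to_K,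
    RCLike.conj_ofReal]
  norm_cast

variable [CompleteSpace H]

lemma isSelfAdjoint_shiftedInverse (hT : IsSelfAdjoint T) (s : ℝ) :
    IsSelfAdjoint (T.shiftedInverse s) :=
  (hT.add ((IsSelfAdjoint.all s).smul (IsSelfAdjoint.one _))).ringInverse

lemma isUnit_add_smul_one (hT : ∀ x, 0 ≤ (⟪T x, x⟫_ℂ).re) (hs : 0 < s) : IsUnit (T + s • 1) :=
  isUnit_of_forall_le_norm_inner_map _ (c := ⟨s, hs.le⟩) hs fun x => calc
    ‖x‖ ^ 2 * s ≤ (⟪(T + s • 1) x, x⟫_ℂ).re := by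
      rw [re_inner_add_smul_one_apply_self]; nlinarith [hT x]
    _ ≤ ‖⟪(T + s • 1) x, x⟫_ℂ‖ := Complex.re_le_norm _

lemma add_smul_one_mul_shiftedInverse (hT : ∀ x, 0 ≤ (⟪T x, x⟫_ℂ).re) (hs : 0 < s) :
    (T + s • 1) * T.shiftedInverse s = 1 :=
  Ring.mul_inverse_cancel _ (isUnit_add_smul_one hT hs)

lemma shiftedInverse_mul_add_smul_one (hT : ∀ x, 0 ≤ (⟪T x, x⟫_ℂ).re) (hs : 0 < s) :
    T.shiftedInverse s * (T + s • 1) = 1 :=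
  Ring.inverse_mul_cancel _ (isUnit_add_smul_one hT hs)

lemma apply_shiftedInverse_apply_add_smul (hT : ∀ x, 0 ≤ (⟪T x, x⟫_ℂ).re) (hs : 0 < s) (f : H) :
    T (T.shiftedInverse s f) + s • T.shiftedInverse s f = f := by
  simpa using congr($(add_smul_one_mul_shiftedInverse hT hs) f)

lemma norm_shiftedInverse_apply_le (hT : ∀ x, 0 ≤ (⟪T x, x⟫_ℂ).re) (hs : 0 < s) (f : H) :
    ‖T.shiftedInverse s f‖ ≤ s⁻¹ * ‖f‖ := by
  set u := T.shiftedInverse s f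
  have hcoer : s * ‖u‖ ^ 2 ≤ ‖f‖ * ‖u‖ := calc
    s * ‖u‖ ^ 2 ≤ (⟪(T + s • 1) u, u⟫_ℂ).re := by
      rw [re_inner_add_smul_one_apply_self]; nlinarith [hT u]
    _ ≤ ‖f‖ * ‖u‖ := by
      rw [show (T + s • 1) u = f by simpa using apply_shiftedInverse_apply_add_smul hT hs f]
      exact (Complex.re_le_norm _).trans (norm_inner_le_norm f u)
  rw [inv_mul_eq_div, le_div_iff₀ hs]
  rcases (norm_nonneg u).eq_or_lt with h0 | h0
  · rw [← h0, zero_mul]; positivity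
  · exact le_of_mul_le_mul_right (by nlinarith) h0

lemma hasDerivAt_shiftedInverse (hT : ∀ x, 0 ≤ (⟪T x, x⟫_ℂ).re) (hs : 0 < s) :
    HasDerivAt T.shiftedInverse (-(T.shiftedInverse s * T.shiftedInverse s)) s := by
  obtain ⟨u, hu⟩ := isUnit_add_smul_one hT hs
  have hR : T.shiftedInverse s = ↑u⁻¹ := by rw [shiftedInverse, ← hu, Ring.inverse_unit]
  have hA : HasDerivAt (fun t : ℝ => T + t • (1 : H →L[ℂ] H)) 1 s := by
    simpa using ((hasDerivAt_id s).smul_const (1 : H →L[ℂ] H)).const_add T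
  have hinv := (hu ▸ hasFDerivAt_ringInverse (𝕜 := ℝ) u).comp_hasDerivAt s hA
  simp only [neg_apply, mulLeftRight_apply, mul_one] at hinv
  rw [hR]
  exact hinv

lemma hasDerivAt_smul_shiftedInverse (hT : ∀ x, 0 ≤ (⟪T x, x⟫_ℂ).re) (hs : 0 < s) :
    HasDerivAt (fun t : ℝ => t • T.shiftedInverse t)
      (T.shiftedInverse s * T * T.shiftedInverse s) s := by
  have hRT : T.shiftedInverse s * T = 1 - s • T.shiftedInverse s := by
    rw [eq_sub_iff_add_eq, ← mul_smul_one, ← mul_add]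
    exact shiftedInverse_mul_add_smul_one hT hs
  -- `(s R_s)' = R_s - s R_s² = (1 - s R_s) R_s = R_s T R_s`
  have hval : T.shiftedInverse s * T * T.shiftedInverse s
      = id s • -(T.shiftedInverse s * T.shiftedInverse s) + (1 : ℝ) • T.shiftedInverse s := by
    rw [hRT, sub_mul, one_mul, smul_mul_assoc, id, smul_neg, one_smul]; abel
  rw [hval]
  exact (hasDerivAt_id s).smul (hasDerivAt_shiftedInverse hT hs)

lemma IsPositive.norm_cfc_sqrt_apply_sq (hT : T.IsPositive) (x : H) :
    ‖cfc Real.sqrt T x‖ ^ 2 = (⟪T x, x⟫_ℂ).re := by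
  have hsq : cfc Real.sqrt T * cfc Real.sqrt T = T := by
    rw [← cfc_mul ..]
    exact (cfc_congr fun t ht => Real.mul_self_sqrt (spectrum_nonneg_of_nonneg
      ((nonneg_iff_isPositive T).2 hT) ht)).trans (cfc_id' ℝ T hT.isSelfAdjoint)
  have hQ : ∀ y z : H, ⟪cfc Real.sqrt T y, z⟫_ℂ = ⟪y, cfc Real.sqrt T z⟫_ℂ :=
    (cfc_predicate Real.sqrt T).isSymmetric
  rw [← inner_self_eq_norm_sq (𝕜 := ℂ), hQ, ← mul_apply_eq_comp, hsq, RCLike.re_to_complex,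
    ← inner_conj_symm, Complex.conj_re]

lemma continuousOn_shiftedInverse (hT : ∀ x, 0 ≤ (⟪T x, x⟫_ℂ).re) :
    ContinuousOn T.shiftedInverse (Ioi 0) := fun _ hs =>
  (hasDerivAt_shiftedInverse hT hs).continuousAt.continuousWithinAt

lemma re_inner_smul_shiftedInverse_nonneg (hT : ∀ x, 0 ≤ (⟪T x, x⟫_ℂ).re) (hs : 0 < s) (f : H) :
    0 ≤ (⟪f, (s • T.shiftedInverse s) f⟫_ℂ).re := by
  have hf : (T + s • 1) (T.shiftedInverse s f) = f := by
    simpa using apply_shiftedInverse_apply_add_smul hT hs f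
  rw [smul_apply, RCLike.real_smul_eq_coe_smul (K := ℂ), inner_smul_real_right, Complex.smul_re]
  nth_rw 1 [← hf]
  rw [re_inner_add_smul_one_apply_self]
  have := hT (T.shiftedInverse s f)
  positivity

lemma tendsto_smul_shiftedInverse_apply_atTop (hT : ∀ x, 0 ≤ (⟪T x, x⟫_ℂ).re) (f : H) :
    Tendsto (fun t : ℝ => (t • T.shiftedInverse t) f) atTop (𝓝 f) := by
  rw [tendsto_iff_norm_sub_tendsto_zero]
  refine squeeze_zero' (Eventually.of_forall fun _ => norm_nonneg _) ?_
    (by simpa using tendsto_inv_atTop_zero.const_mul (‖T‖ * ‖f‖))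
  filter_upwards [eventually_gt_atTop 0] with t ht
  have hf := apply_shiftedInverse_apply_add_smul hT ht f
  calc ‖(t • T.shiftedInverse t) f - f‖
      = ‖t • T.shiftedInverse t f - (T (T.shiftedInverse t f) + t • T.shiftedInverse t f)‖ := by
        rw [hf, smul_apply]
    _ = ‖T (T.shiftedInverse t f)‖ := by rw [sub_add_cancel_right, norm_neg]
    _ ≤ ‖T‖ * (t⁻¹ * ‖f‖) := T.le_opNorm_of_le (norm_shiftedInverse_apply_le hT ht f)
    _ = ‖T‖ * ‖f‖ * t⁻¹ := by ring

lemma hasDerivAt_re_inner_smul_shiftedInverse (hT : T.IsPositive) (hs : 0 < s) (f : H) :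
    HasDerivAt (fun t : ℝ => (⟪f, (t • T.shiftedInverse t) f⟫_ℂ).re)
      (‖cfc Real.sqrt T (T.shiftedInverse s f)‖ ^ 2) s := by
  let φ : (H →L[ℂ] H) →L[ℝ] ℝ :=
    (Complex.reCLM.comp ((innerSL ℂ f).restrictScalars ℝ)).comp ((apply ℂ H f).restrictScalars ℝ)
  have hR : ∀ y z : H, ⟪T.shiftedInverse s y, z⟫_ℂ = ⟪y, T.shiftedInverse s z⟫_ℂ :=
    (isSelfAdjoint_shiftedInverse hT.isSelfAdjoint s).isSymmetric
  have hval : φ (T.shiftedInverse s * T * T.shiftedInverse s)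
      = ‖cfc Real.sqrt T (T.shiftedInverse s f)‖ ^ 2 := by
    simp only [φ, coe_comp, Function.comp_apply, coe_restrictScalars', apply_apply,
      innerSL_apply_apply, Complex.reCLM_apply, mul_apply_eq_comp]
    rw [← hR, hT.norm_cfc_sqrt_apply_sq, ← inner_conj_symm, Complex.conj_re]
  exact hval ▸ φ.hasFDerivAt.comp_hasDerivAt s
    (hasDerivAt_smul_shiftedInverse hT.re_inner_nonneg_left hs)

variable {S : H →L[ℂ] H} {M : ℝ}

lemma integrableOn_norm_cfc_sqrt_shiftedInverse_sq_and_integral_le (hT : T.IsPositive) (f : H) :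
    IntegrableOn (fun s => ‖cfc Real.sqrt T (T.shiftedInverse s f)‖ ^ 2) (Ioi 0) ∧
      ∫ s in Ioi 0, ‖cfc Real.sqrt T (T.shiftedInverse s f)‖ ^ 2 ≤ ‖f‖ ^ 2 := by
  have hlim : Tendsto (fun t : ℝ => (⟪f, (t • T.shiftedInverse t) f⟫_ℂ).re) atTop
      (𝓝 (‖f‖ ^ 2)) := by
    rw [← inner_self_eq_norm_sq (𝕜 := ℂ)]
    exact ((Complex.continuous_re.comp (innerSL ℂ f).continuous).tendsto f).comp
      (tendsto_smul_shiftedInverse_apply_atTop hT.re_inner_nonneg_left f)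
  simpa using integrableOn_Ioi_deriv_and_integral_le_of_nonneg
    (fun s hs => hasDerivAt_re_inner_smul_shiftedInverse hT hs f) (fun _ _ => sq_nonneg _)
    (fun s hs => re_inner_smul_shiftedInverse_nonneg hT.re_inner_nonneg_left hs f) hlim

lemma integrableOn_inner_shiftedInverse_and_norm_integral_le (hT : T.IsPositive) (hM : 0 ≤ M)
    (hS : ∀ u v : H, ‖⟪S u, v⟫_ℂ‖ ≤ M * ‖cfc Real.sqrt T u‖ * ‖cfc Real.sqrt T v‖) (f g : H) :
    IntegrableOn (fun s => ⟪S (T.shiftedInverse s f), T.shiftedInverse s g⟫_ℂ) (Ioi 0) ∧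
      ‖∫ s in Ioi 0, ⟪S (T.shiftedInverse s f), T.shiftedInverse s g⟫_ℂ‖
        ≤ M / 2 * (‖f‖ ^ 2 + ‖g‖ ^ 2) := by
  obtain ⟨hf, hf_le⟩ := integrableOn_norm_cfc_sqrt_shiftedInverse_sq_and_integral_le hT f
  obtain ⟨hg, hg_le⟩ := integrableOn_norm_cfc_sqrt_shiftedInverse_sq_and_integral_le hT g
  have hmaj := (hf.add hg).const_mul (M / 2)
  have hamgm : ∀ a b : ℝ, M * a * b ≤ M / 2 * (a ^ 2 + b ^ 2) := fun a b => by
    nlinarith [two_mul_le_add_sq a b]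
  have hbound : ∀ s, ‖⟪S (T.shiftedInverse s f), T.shiftedInverse s g⟫_ℂ‖ ≤ M / 2 *
      (‖cfc Real.sqrt T (T.shiftedInverse s f)‖ ^ 2
        + ‖cfc Real.sqrt T (T.shiftedInverse s g)‖ ^ 2) :=
    fun s => (hS _ _).trans (hamgm _ _)
  have hR := continuousOn_shiftedInverse hT.re_inner_nonneg_left
  have hcont :
      ContinuousOn (fun s => ⟪S (T.shiftedInverse s f), T.shiftedInverse s g⟫_ℂ) (Ioi 0) :=
    (S.continuous.comp_continuousOn (hR.clm_apply continuousOn_const)).inner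
      (hR.clm_apply continuousOn_const)
  refine ⟨hmaj.mono' (hcont.aestronglyMeasurable measurableSet_Ioi) (ae_of_all _ hbound), ?_⟩
  calc ‖∫ s in Ioi 0, ⟪S (T.shiftedInverse s f), T.shiftedInverse s g⟫_ℂ‖
      ≤ ∫ s in Ioi 0, M / 2 * (‖cfc Real.sqrt T (T.shiftedInverse s f)‖ ^ 2
          + ‖cfc Real.sqrt T (T.shiftedInverse s g)‖ ^ 2) :=
        norm_integral_le_of_norm_le hmaj (ae_of_all _ hbound)
    _ = M / 2 * ((∫ s in Ioi 0, ‖cfc Real.sqrt T (T.shiftedInverse s f)‖ ^ 2)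
          + ∫ s in Ioi 0, ‖cfc Real.sqrt T (T.shiftedInverse s g)‖ ^ 2) := by
        rw [integral_const_mul, integral_add hf hg]
    _ ≤ M / 2 * (‖f‖ ^ 2 + ‖g‖ ^ 2) := by gcongr

end ContinuousLinearMap

theorem exists_weak_integral_operator_general {H : Type*} [NormedAddCommGroup H]
    [InnerProductSpace ℂ H] [CompleteSpace H] (T S : H →L[ℂ] H) (M : ℝ)
    (hT : IsSelfAdjoint T) (hpos : ∀ f : H, 0 ≤ (inner ℂ (T f) f : ℂ).re)
    (hM : 0 ≤ M)
    (hS : ∀ u v : H, ‖(inner ℂ (S u) v : ℂ)‖ ≤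
      M * ‖cfc Real.sqrt T u‖ * ‖cfc Real.sqrt T v‖) :
    (∀ s : ℝ, 0 < s → IsUnit (T + s • (1 : H →L[ℂ] H))) ∧
    ∃ L : H →L[ℂ] H, ‖L‖ ≤ M ∧
      ∀ f g : H,
        IntegrableOn
          (fun s : ℝ => (inner ℂ (S (Ring.inverse (T + s • (1 : H →L[ℂ] H)) f))
            (Ring.inverse (T + s • (1 : H →L[ℂ] H)) g) : ℂ))
          (Set.Ioi 0) ∧
        (inner ℂ (L f) g : ℂ) =
          ∫ s in Set.Ioi (0 : ℝ),
            (inner ℂ (S (Ring.inverse (T + s • (1 : H →L[ℂ] H)) f))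
              (Ring.inverse (T + s • (1 : H →L[ℂ] H)) g) : ℂ) := by
  have hTpos : T.IsPositive := ⟨hT.isSymmetric, hpos⟩
  have hint :=
    ContinuousLinearMap.integrableOn_inner_shiftedInverse_and_norm_integral_le hTpos hM hS
  obtain ⟨L, hL, hL_inner⟩ := InnerProductSpace.exists_inner_eq_integral
    (μ := volume.restrict (Ioi 0)) (fun s => (innerSL ℂ).bilinearComp
      (S ∘L T.shiftedInverse s) (T.shiftedInverse s)) hM
    (fun f g => (hint f g).1) (fun f g => (hint f g).2)
  exact ⟨fun s hs => ContinuousLinearMap.isUnit_add_smul_one hpos hs, L, hL,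
    fun f g => ⟨(hint f g).1, hL_inner f g⟩⟩

/-- Let `T` be a bounded self-adjoint positive injective operator on a complex Hilbert space
and `S` a bounded operator with `|⟪S u, v⟫| ≤ M ‖T^{1/2} u‖ ‖T^{1/2} v‖` for all `u, v`,
where `T^{1/2} = cfc Real.sqrt T`. Then for every `s > 0` the operator `T + s • 1` is
invertible, and there is a bounded operator `L` with `‖L‖ ≤ M` such that for all `f, g`
the function `s ↦ ⟪S((T + s•1)⁻¹ f), (T + s•1)⁻¹ g⟫` is integrable on `(0, ∞)` and
`⟪L f, g⟫ = ∫₀^∞ ⟪S((T + s•1)⁻¹ f), (T + s•1)⁻¹ g⟫ ds`. -/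
theorem exists_weak_integral_operator {H : Type*} [NormedAddCommGroup H]
    [InnerProductSpace ℂ H] [CompleteSpace H] (T S : H →L[ℂ] H) (M : ℝ)
    (hT : IsSelfAdjoint T) (hpos : ∀ f : H, 0 ≤ (inner ℂ (T f) f : ℂ).re)
    (hinj : Function.Injective T) (hM : 0 ≤ M)
    (hS : ∀ u v : H, ‖(inner ℂ (S u) v : ℂ)‖ ≤
      M * ‖cfc Real.sqrt T u‖ * ‖cfc Real.sqrt T v‖) :
    (∀ s : ℝ, 0 < s → IsUnit (T + s • (1 : H →L[ℂ] H))) ∧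
    ∃ L : H →L[ℂ] H, ‖L‖ ≤ M ∧
      ∀ f g : H,
        IntegrableOn
          (fun s : ℝ => (inner ℂ (S (Ring.inverse (T + s • (1 : H →L[ℂ] H)) f))
            (Ring.inverse (T + s • (1 : H →L[ℂ] H)) g) : ℂ))
          (Set.Ioi 0) ∧
        (inner ℂ (L f) g : ℂ) =
          ∫ s in Set.Ioi (0 : ℝ),
            (inner ℂ (S (Ring.inverse (T + s • (1 : H →L[ℂ] H)) f))
              (Ring.inverse (T + s • (1 : H →L[ℂ] H)) g) : ℂ) :=
  exists_weak_integral_operator_general T S M hT hpos hM hS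
end
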